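/- Let $X$ have predual $^*X$, with $^*X$ reflexive or $X$ separable, and let $1 < p < t < r < \infty$ or $1 < p \le t < r = \infty$. Then the space $L_c^{p'}(^*X)$ of compactly supported $p'$-integrable ${}^*X$-valued functions is dense in $\mathcal{H}_{p'}^{t',r'}(^*X)$. -/

import Mathlib

open MeasureTheory Filter ENNReal

noncomputable section

/-- The dyadic cube `Q_{j,m} = ∏ᵢ [2^{-j} mᵢ, 2^{-j}(mᵢ+1))` in `ℝⁿ`. -/
def dyadicCube (n : ℕ) (j : ℤ) (m : Fin n → ℤ) : Set (Fin n → ℝ) :=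
  {x | ∀ i, (2:ℝ) ^ (-(j:ℝ)) * m i ≤ x i ∧ x i < (2:ℝ) ^ (-(j:ℝ)) * (m i + 1)}

/-- The volume `2^{-jn}` of a dyadic cube of generation `j`, as an extended nonnegative real. -/
def cubeVol (n : ℕ) (j : ℤ) : ℝ≥0∞ := (2:ℝ≥0∞) ^ (-((j:ℝ) * n))

/-- The `ℓ^r` norm of an `ℝ≥0∞`-valued family, `r ∈ (0,∞]`. -/
def lrNorm {ι : Type*} (r : ℝ≥0∞) (a : ι → ℝ≥0∞) : ℝ≥0∞ :=
  if r = ∞ then ⨆ i, a i else (∑' i, a i ^ r.toReal) ^ (1 / r.toReal)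

/-- The Bourgain–Morrey norm of an `X`-valued function on `ℝⁿ`. -/
def BMnorm (n : ℕ) (p t : ℝ) (r : ℝ≥0∞) {X : Type*} [NormedAddCommGroup X]
    (f : (Fin n → ℝ) → X) : ℝ≥0∞ :=
  lrNorm r fun jm : ℤ × (Fin n → ℤ) =>
    cubeVol n jm.1 ^ (1/t - 1/p) *
      (∫⁻ x in dyadicCube n jm.1 jm.2, (‖f x‖₊ : ℝ≥0∞) ^ p) ^ (1/p)

/-- Membership in the Bourgain–Morrey space `M_p^{t,r}(X)`. -/
def MemBM (n : ℕ) (p t : ℝ) (r : ℝ≥0∞) {X : Type*} [NormedAddCommGroup X]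
    (f : (Fin n → ℝ) → X) : Prop :=
  AEStronglyMeasurable f volume ∧ BMnorm n p t r f < ∞

/-- The conjugate exponent `a' = a/(a-1)`. -/
def conj (a : ℝ) : ℝ := a / (a - 1)

/-- The conjugate exponent of `r ∈ (1,∞]`, with `∞' = 1`. -/
def conjE (r : ℝ≥0∞) : ℝ := if r = ∞ then 1 else conj r.toReal

/-- A `(p',t',Y)`-block supported on the dyadic cube `Q_{j,k}`. -/
def IsBlock (n : ℕ) (p t : ℝ) (j : ℤ) (k : Fin n → ℤ) {Y : Type*} [NormedAddCommGroup Y]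
    (b : (Fin n → ℝ) → Y) : Prop :=
  AEStronglyMeasurable b volume ∧ (∀ x, x ∉ dyadicCube n j k → b x = 0) ∧
    (∫⁻ x, (‖b x‖₊ : ℝ≥0∞) ^ conj p) ^ (1 / conj p) ≤ cubeVol n j ^ (1/t - 1/p)

/-- A representation of `f` as an a.e. convergent sum of blocks with coefficients `lam`. -/
def IsBlockRep (n : ℕ) (p t : ℝ) {Y : Type*} [NormedAddCommGroup Y] [NormedSpace ℝ Y]
    (f : (Fin n → ℝ) → Y) (lam : ℤ × (Fin n → ℤ) → ℝ)
    (b : ℤ × (Fin n → ℤ) → (Fin n → ℝ) → Y) : Prop :=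
  (∀ jk : ℤ × (Fin n → ℤ), IsBlock n p t jk.1 jk.2 (b jk)) ∧
    ∀ᵐ x : Fin n → ℝ ∂volume, HasSum (fun jk => lam jk • b jk x) (f x)

/-- The norm of the block space `𝓗_{p'}^{t',r'}(Y)` (parametrized by `p`, `t` and `r'`). -/
def blockNorm (n : ℕ) (p t r' : ℝ) {Y : Type*} [NormedAddCommGroup Y] [NormedSpace ℝ Y]
    (f : (Fin n → ℝ) → Y) : ℝ≥0∞ :=
  ⨅ (lam : ℤ × (Fin n → ℤ) → ℝ) (b : ℤ × (Fin n → ℤ) → (Fin n → ℝ) → Y)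
    (_ : IsBlockRep n p t f lam b),
    (∑' jk : ℤ × (Fin n → ℤ), ENNReal.ofReal |lam jk| ^ r') ^ (1 / r')

/-- Membership in the block space `𝓗_{p'}^{t',r'}(Y)`. -/
def MemBlock (n : ℕ) (p t r' : ℝ) {Y : Type*} [NormedAddCommGroup Y] [NormedSpace ℝ Y]
    (f : (Fin n → ℝ) → Y) : Prop := blockNorm n p t r' f < ∞

/-- The dyadic averaging operator `E_k` at generation `k`. -/
def Ek (n : ℕ) {X : Type*} [NormedAddCommGroup X] [NormedSpace ℝ X]
    (k : ℤ) (f : (Fin n → ℝ) → X) (x : Fin n → ℝ) : X :=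
  ((2:ℝ) ^ ((k:ℝ) * n)) • ∫ y in dyadicCube n k fun i => ⌊(2:ℝ) ^ (k:ℝ) * x i⌋, f y

/-!
A function of the block space is an a.e. convergent sum `∑ λ_{j,k} b_{j,k}` of blocks with
`λ ∈ ℓ^{r'}`. Each block is an `L^{p'}` function supported in a bounded cube, so every finite
partial sum lies in `L_c^{p'}`. Subtracting it leaves a block sum whose coefficients are the
tail of `λ`, and the `ℓ^{r'}` norm of that tail tends to zero along the finite sets.
-/

lemma conj_pos {a : ℝ} (ha : 1 < a) : 0 < conj a :=
  div_pos (by linarith) (by linarith)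

lemma conjE_pos {r : ℝ≥0∞} (hr : 1 < r) : 0 < conjE r := by
  unfold conjE
  split_ifs with htop
  · exact one_pos
  · exact conj_pos (by simpa using (ENNReal.toReal_lt_toReal one_ne_top htop).mpr hr)

lemma isCompact_closure_dyadicCube (n : ℕ) (j : ℤ) (m : Fin n → ℤ) :
    IsCompact (closure (dyadicCube n j m)) := by
  have hbox : IsCompact (Set.univ.pi fun i =>
      Set.Icc ((2:ℝ) ^ (-(j:ℝ)) * m i) ((2:ℝ) ^ (-(j:ℝ)) * (m i + 1))) :=
    isCompact_univ_pi fun _ => isCompact_Icc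
  refine hbox.of_isClosed_subset isClosed_closure (closure_minimal ?_ hbox.isClosed)
  exact fun x hx i _ => ⟨(hx i).1, (hx i).2.le⟩

lemma cubeVol_ne_zero (n : ℕ) (j : ℤ) : cubeVol n j ≠ 0 :=
  (rpow_pos (by norm_num) ofNat_ne_top).ne'

lemma cubeVol_ne_top (n : ℕ) (j : ℤ) : cubeVol n j ≠ ∞ :=
  rpow_ne_top_of_ne_zero two_ne_zero ofNat_ne_top

section Blocks

variable {n : ℕ} {p t : ℝ} {Y : Type*} [NormedAddCommGroup Y]

lemma IsBlock.hasCompactSupport {j : ℤ} {k : Fin n → ℤ} {b : (Fin n → ℝ) → Y}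
    (hb : IsBlock n p t j k b) : HasCompactSupport b :=
  HasCompactSupport.intro (isCompact_closure_dyadicCube n j k) fun x hx =>
    hb.2.1 x fun hxQ => hx (subset_closure hxQ)

lemma IsBlock.memLp {j : ℤ} {k : Fin n → ℤ} {b : (Fin n → ℝ) → Y}
    (hb : IsBlock n p t j k b) (hp : 1 < p) : MemLp b (ENNReal.ofReal (conj p)) volume := by
  have hq := conj_pos hp
  refine ⟨hb.1, ?_⟩
  rw [eLpNorm_eq_lintegral_rpow_enorm_toReal (by simpa using hq) ofReal_ne_top,
    toReal_ofReal hq.le]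
  exact hb.2.2.trans_lt
    (rpow_ne_top_of_ne_zero (cubeVol_ne_zero n j) (cubeVol_ne_top n j)).lt_top

variable [NormedSpace ℝ Y] {lam : ℤ × (Fin n → ℤ) → ℝ} {b : ℤ × (Fin n → ℤ) → (Fin n → ℝ) → Y}

lemma memLp_finsetSum_smul_block
    (hb : ∀ jk : ℤ × (Fin n → ℤ), IsBlock n p t jk.1 jk.2 (b jk))
    (hp : 1 < p) (F : Finset (ℤ × (Fin n → ℤ))) :
    MemLp (fun x => ∑ jk ∈ F, lam jk • b jk x) (ENNReal.ofReal (conj p)) volume :=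
  memLp_finsetSum F fun jk _ => ((hb jk).memLp hp).const_smul (lam jk)

lemma hasCompactSupport_finsetSum_smul_block
    (hb : ∀ jk : ℤ × (Fin n → ℤ), IsBlock n p t jk.1 jk.2 (b jk))
    (F : Finset (ℤ × (Fin n → ℤ))) :
    HasCompactSupport (fun x => ∑ jk ∈ F, lam jk • b jk x) := by
  simpa only [Finset.sum_fn, Pi.smul_apply'] using
    HasCompactSupport.finset_sum fun jk _ =>
      (hb jk).hasCompactSupport.smul_left (f := fun _ => lam jk)

lemma IsBlockRep.sub_finsetSum {f : (Fin n → ℝ) → Y} (hrep : IsBlockRep n p t f lam b)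
    (F : Finset (ℤ × (Fin n → ℤ))) :
    IsBlockRep n p t (fun x => f x - ∑ jk ∈ F, lam jk • b jk x)
      ((↑F : Set _)ᶜ.indicator lam) b := by
  refine ⟨hrep.1, ?_⟩
  filter_upwards [hrep.2] with x hx
  have hpartial : HasSum ((↑F : Set _).indicator fun jk => lam jk • b jk x)
      (∑ jk ∈ F, lam jk • b jk x) :=
    hasSum_subtype_iff_indicator.mp (F.hasSum _)
  convert hx.sub hpartial using 1
  ext jk
  by_cases hjk : jk ∈ F <;> simp [hjk]

lemma blockNorm_le_of_isBlockRep {r' : ℝ} {f : (Fin n → ℝ) → Y}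
    (hrep : IsBlockRep n p t f lam b) :
    blockNorm n p t r' f ≤ (∑' jk, ENNReal.ofReal |lam jk| ^ r') ^ (1 / r') :=
  iInf_le_of_le lam (iInf_le_of_le b (iInf_le _ hrep))

lemma MemBlock.exists_isBlockRep {r' : ℝ} {f : (Fin n → ℝ) → Y} (hf : MemBlock n p t r' f)
    (hr' : 0 < r') : ∃ lam b, IsBlockRep n p t f lam b ∧
      ∑' jk, ENNReal.ofReal |lam jk| ^ r' ≠ ∞ := by
  simp only [MemBlock, blockNorm, iInf_lt_iff] at hf
  obtain ⟨lam, b, hrep, hlt⟩ := hf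
  exact ⟨lam, b, hrep, ((rpow_lt_top_iff_of_pos (one_div_pos.mpr hr')).mp hlt).ne⟩

end Blocks

lemma exists_finset_tsum_indicator_compl_rpow_lt {ι : Type*} {q : ℝ} (hq : 0 < q)
    {a : ι → ℝ} (ha : ∑' i, ENNReal.ofReal |a i| ^ q ≠ ∞) {ε : ℝ≥0∞} (hε : 0 < ε) :
    ∃ F : Finset ι,
      (∑' i, ENNReal.ofReal |(↑F : Set ι)ᶜ.indicator a i| ^ q) ^ (1 / q) < ε := by
  have hindicator : ∀ F : Finset ι, ∑' i, ENNReal.ofReal |(↑F : Set ι)ᶜ.indicator a i| ^ q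
      = ∑' i : {i // i ∉ F}, ENNReal.ofReal |a i| ^ q := fun F => by
    refine (tsum_congr fun i => ?_).trans
      (tsum_subtype ((↑F : Set ι)ᶜ) fun i => ENNReal.ofReal |a i| ^ q).symm
    exact congr_fun (Set.indicator_comp_of_zero (g := fun y : ℝ => ENNReal.ofReal |y| ^ q)
      (f := a) (by simp [hq])).symm i
  have htail : Tendsto
      (fun F : Finset ι => (∑' i : {i // i ∉ F}, ENNReal.ofReal |a i| ^ q) ^ (1 / q))
      atTop (nhds (0 ^ (1 / q))) :=
    (continuous_rpow_const.tendsto 0).comp (tendsto_tsum_compl_atTop_zero ha)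
  rw [zero_rpow_of_pos (one_div_pos.mpr hq)] at htail
  simp_rw [hindicator]
  exact (htail.eventually (gt_mem_nhds hε)).exists

theorem Lp_c_dense_in_block_space_general (n : ℕ) (p t : ℝ) (r : ℝ≥0∞)
    {Xp : Type*} [NormedAddCommGroup Xp] [NormedSpace ℝ Xp]
    (hp : 1 < p)
    (hcase : (p < t ∧ ENNReal.ofReal t < r ∧ r ≠ ∞) ∨ (p ≤ t ∧ r = ∞))
    (f : (Fin n → ℝ) → Xp) (hf : MemBlock n p t (conjE r) f)
    (ε : ℝ≥0∞) (hε : 0 < ε) :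
    ∃ g : (Fin n → ℝ) → Xp,
      MeasureTheory.MemLp g (ENNReal.ofReal (conj p)) volume ∧ HasCompactSupport g ∧
        blockNorm n p t (conjE r) (fun x => f x - g x) < ε := by
  have hr : 1 < r := by
    rcases hcase with ⟨hpt, htr, -⟩ | ⟨-, rfl⟩
    · exact (one_lt_ofReal.mpr (hp.trans hpt)).trans htr
    · exact one_lt_top
  obtain ⟨lam, b, hrep, hsum⟩ := hf.exists_isBlockRep (conjE_pos hr)
  obtain ⟨F, hF⟩ := exists_finset_tsum_indicator_compl_rpow_lt (conjE_pos hr) hsum hε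
  exact ⟨_, memLp_finsetSum_smul_block hrep.1 hp F,
    hasCompactSupport_finsetSum_smul_block hrep.1 F,
    (blockNorm_le_of_isBlockRep (hrep.sub_finsetSum F)).trans_lt hF⟩

theorem Lp_c_dense_in_block_space (n : ℕ) (p t : ℝ) (r : ℝ≥0∞)
    {Xp : Type*} [NormedAddCommGroup Xp] [NormedSpace ℝ Xp] [CompleteSpace Xp]
    (hXp : Function.Surjective ⇑(NormedSpace.inclusionInDoubleDual ℝ Xp) ∨
      TopologicalSpace.SeparableSpace (StrongDual ℝ Xp))
    (hp : 1 < p)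
    (hcase : (p < t ∧ ENNReal.ofReal t < r ∧ r ≠ ∞) ∨ (p ≤ t ∧ r = ∞))
    (f : (Fin n → ℝ) → Xp) (hf : MemBlock n p t (conjE r) f)
    (ε : ℝ≥0∞) (hε : 0 < ε) :
    ∃ g : (Fin n → ℝ) → Xp,
      MeasureTheory.MemLp g (ENNReal.ofReal (conj p)) volume ∧ HasCompactSupport g ∧
        blockNorm n p t (conjE r) (fun x => f x - g x) < ε :=
  Lp_c_dense_in_block_space_general n p t r hp hcase f hf ε hε

end
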